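/- arXiv:2604.02599 — 5 statements merged into one kernel-verified Lean document; each statement's English description precedes it below -/
import Mathlib

section
/- Let u* > 0, α > 0, γ > 0 with 2γ ≤ α + 1, and define C_{α,γ} by: C_{α,γ} = (α+1)²/(4α) if 0 < α < 1; C_{α,γ} = 1 if α ≥ 1 and 0 < γ ≤ 1; C_{α,γ} = γ²/(2γ-1) if α ≥ 1 and γ > 1. Then for all u > 0, (u^γ - (u*)^γ)² ≤ C_{α,γ} · (u*)^{2γ-α-1} · (u - u*)(u^α - (u*)^α). -/
open Real Set

lemma g_nonneg {a b : ℝ} (ha : 0 < a) (hab : a ≤ b) (hs : a + b = 2) {x : ℝ} (hx : 0 < x) :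
    0 ≤ (b - a) * x ^ b - b * x ^ (b - a) + a := by
  have hb : 0 < b := lt_of_lt_of_le ha hab
  have h := Real.geom_mean_le_arith_mean2_weighted (w₁ := (b - a) / b) (w₂ := a / b)
    (p₁ := x ^ b) (p₂ := 1)
    (div_nonneg (by linarith) hb.le) (by positivity) (Real.rpow_pos_of_pos hx b).le zero_le_one
    (by field_simp; ring)
  rw [Real.one_rpow, mul_one, ← Real.rpow_mul hx.le] at h
  rw [show b * ((b - a) / b) = b - a by rw [mul_comm]; exact div_mul_cancel₀ _ hb.ne'] at h
  have h2 := mul_le_mul_of_nonneg_left h hb.le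
  have h3 : b * ((b - a) / b * x ^ b + a / b) = (b - a) * x ^ b + a := by first | (field_simp; ring) | field_simp
  linarith [h2, h3.le, h3.ge]

lemma core {a b : ℝ} (ha : 0 < a) (hab : a ≤ b) (hs : a + b = 2) {x : ℝ} (hx : 0 < x) :
    a * b * (x - 1) ^ 2 ≤ (x ^ a - 1) * (x ^ b - 1) := by
  have hb : 0 < b := lt_of_lt_of_le ha hab
  have hb1 : 1 ≤ b := by linarith
  set h : ℝ → ℝ := fun y => (y ^ a - 1) * (y ^ b - 1) - a * b * (y - 1) ^ 2 with hh
  set h1 : ℝ → ℝ := fun y =>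
    a * y ^ (a - 1) * (y ^ b - 1) + (y ^ a - 1) * (b * y ^ (b - 1)) - a * b * (2 * (y - 1))
    with hh1
  have hd : ∀ y : ℝ, y ≠ 0 → HasDerivAt h (h1 y) y := by
    intro y hy
    have d1 : HasDerivAt (fun z : ℝ => z ^ a) (a * y ^ (a - 1)) y :=
      Real.hasDerivAt_rpow_const (Or.inl hy)
    have d2 : HasDerivAt (fun z : ℝ => z ^ b) (b * y ^ (b - 1)) y :=
      Real.hasDerivAt_rpow_const (Or.inl hy)
    have d3 : HasDerivAt (fun z : ℝ => a * b * (z - 1) ^ 2) (a * b * (2 * (y - 1))) y := by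
      have := (((hasDerivAt_id y).sub_const 1).pow 2).const_mul (a * b)
      simpa using this
    exact ((d1.sub_const 1).mul (d2.sub_const 1)).sub d3
  have hd1 : ∀ y : ℝ, 0 < y → HasDerivAt h1
      (a * ((a - 1) * y ^ (a - 1 - 1)) * (y ^ b - 1) + a * y ^ (a - 1) * (b * y ^ (b - 1))
        + ((a * y ^ (a - 1)) * (b * y ^ (b - 1)) + (y ^ a - 1) * (b * ((b - 1) * y ^ (b - 1 - 1))))
        - a * b * 2) y := by
    intro y hy
    have d1 : HasDerivAt (fun z : ℝ => z ^ a) (a * y ^ (a - 1)) y :=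
      Real.hasDerivAt_rpow_const (Or.inl hy.ne')
    have d2 : HasDerivAt (fun z : ℝ => z ^ b) (b * y ^ (b - 1)) y :=
      Real.hasDerivAt_rpow_const (Or.inl hy.ne')
    have d1' : HasDerivAt (fun z : ℝ => a * z ^ (a - 1)) (a * ((a - 1) * y ^ (a - 1 - 1))) y :=
      (Real.hasDerivAt_rpow_const (Or.inl hy.ne')).const_mul a
    have d2' : HasDerivAt (fun z : ℝ => b * z ^ (b - 1)) (b * ((b - 1) * y ^ (b - 1 - 1))) y :=
      (Real.hasDerivAt_rpow_const (Or.inl hy.ne')).const_mul b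
    have dlin : HasDerivAt (fun z : ℝ => a * b * (2 * (z - 1))) (a * b * 2) y := by
      have := (((hasDerivAt_id y).sub_const 1).const_mul (2 : ℝ)).const_mul (a * b)
      simpa using this
    exact ((d1'.mul (d2.sub_const 1)).add ((d1.sub_const 1).mul d2')).sub dlin
  have hk : ∀ y : ℝ, 0 < y →
      0 ≤ a * ((a - 1) * y ^ (a - 1 - 1)) * (y ^ b - 1) + a * y ^ (a - 1) * (b * y ^ (b - 1))
        + ((a * y ^ (a - 1)) * (b * y ^ (b - 1)) + (y ^ a - 1) * (b * ((b - 1) * y ^ (b - 1 - 1))))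
        - a * b * 2 := by
    intro y hy
    have e1 : y ^ (a - 1) * y ^ (b - 1) = 1 := by
      rw [← Real.rpow_add hy, show a - 1 + (b - 1) = 0 by linarith, Real.rpow_zero]
    have e2 : y ^ (a - 1 - 1) * y ^ b = 1 := by
      rw [← Real.rpow_add hy, show a - 1 - 1 + b = 0 by linarith, Real.rpow_zero]
    have e4 : y ^ (b - 1 - 1) * y ^ a = 1 := by
      rw [← Real.rpow_add hy, show b - 1 - 1 + a = 0 by linarith, Real.rpow_zero]
    have e3 : y ^ (a - 1 - 1) * y ^ (b - a) = y ^ (b - 1 - 1) := by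
      rw [← Real.rpow_add hy]
      ring_nf
    have hg := g_nonneg ha hab hs hy
    have hE : 0 ≤ (b - 1) * (a * y ^ (a - 1 - 1) - b * y ^ (b - 1 - 1) + (b - a)) := by
      apply mul_nonneg (by linarith)
      have heq : a * y ^ (a - 1 - 1) - b * y ^ (b - 1 - 1) + (b - a)
          = y ^ (a - 1 - 1) * ((b - a) * y ^ b - b * y ^ (b - a) + a) := by
        have expand : y ^ (a - 1 - 1) * ((b - a) * y ^ b - b * y ^ (b - a) + a)
            = (b - a) * (y ^ (a - 1 - 1) * y ^ b) - b * (y ^ (a - 1 - 1) * y ^ (b - a))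
              + a * y ^ (a - 1 - 1) := by ring
        rw [expand, e2, e3]; ring
      rw [heq]
      exact mul_nonneg (Real.rpow_pos_of_pos hy _).le hg
    have hA : a * ((a - 1) * y ^ (a - 1 - 1)) * (y ^ b - 1) + a * y ^ (a - 1) * (b * y ^ (b - 1))
        + ((a * y ^ (a - 1)) * (b * y ^ (b - 1)) + (y ^ a - 1) * (b * ((b - 1) * y ^ (b - 1 - 1))))
        - a * b * 2
        = (b - 1) * (a * y ^ (a - 1 - 1) - b * y ^ (b - 1 - 1) + (b - a)) := by
      linear_combination (a * (a - 1)) * e2 + (b * (b - 1)) * e4 + (2 * a * b) * e1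
        + (a * (1 - y ^ (a - 1 - 1))) * hs
    rw [hA]
    exact hE
  have h1_one : h1 1 = 0 := by simp [hh1]
  have h_one : h 1 = 0 := by simp [hh]
  have cont1 : ∀ s : Set ℝ, (∀ y ∈ s, (0:ℝ) < y) → ContinuousOn h1 s := fun s hpos y hy =>
    ((hd1 y (hpos y hy)).continuousAt).continuousWithinAt
  have conth : ∀ s : Set ℝ, (∀ y ∈ s, (0:ℝ) < y) → ContinuousOn h s := fun s hpos y hy =>
    ((hd y (hpos y hy).ne').continuousAt).continuousWithinAt
  have mono1 : MonotoneOn h1 (Ici 1) := by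
    apply monotoneOn_of_deriv_nonneg (convex_Ici 1)
      (cont1 _ (fun y hy => lt_of_lt_of_le one_pos hy))
    · intro y hy
      rw [interior_Ici] at hy
      exact ((hd1 y (lt_trans one_pos hy)).differentiableAt).differentiableWithinAt
    · intro y hy
      rw [interior_Ici] at hy
      rw [(hd1 y (lt_trans one_pos hy)).deriv]
      exact hk y (lt_trans one_pos hy)
  have mono1' : MonotoneOn h1 (Ioc 0 1) := by
    apply monotoneOn_of_deriv_nonneg (convex_Ioc 0 1) (cont1 _ (fun y hy => hy.1))
    · intro y hy
      rw [interior_Ioc] at hy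
      exact ((hd1 y hy.1).differentiableAt).differentiableWithinAt
    · intro y hy
      rw [interior_Ioc] at hy
      rw [(hd1 y hy.1).deriv]
      exact hk y hy.1
  have final : 0 ≤ h x := by
    rcases le_or_gt 1 x with hx1 | hx1
    · have monoh : MonotoneOn h (Ici 1) := by
        apply monotoneOn_of_deriv_nonneg (convex_Ici 1)
          (conth _ (fun y hy => lt_of_lt_of_le one_pos hy))
        · intro y hy
          rw [interior_Ici] at hy
          exact ((hd y (lt_trans one_pos hy).ne')).differentiableAt.differentiableWithinAt
        · intro y hy
          rw [interior_Ici] at hy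
          rw [(hd y (lt_trans one_pos hy).ne').deriv]
          have := mono1 (mem_Ici.mpr le_rfl) (mem_Ici.mpr hy.le) hy.le
          rw [h1_one] at this
          exact this
      have := monoh (mem_Ici.mpr le_rfl) (mem_Ici.mpr hx1) hx1
      rw [h_one] at this
      exact this
    · have antih : AntitoneOn h (Ioc 0 1) := by
        apply antitoneOn_of_deriv_nonpos (convex_Ioc 0 1) (conth _ (fun y hy => hy.1))
        · intro y hy
          rw [interior_Ioc] at hy
          exact ((hd y hy.1.ne')).differentiableAt.differentiableWithinAt
        · intro y hy
          rw [interior_Ioc] at hy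
          rw [(hd y hy.1.ne').deriv]
          have := mono1' (mem_Ioc.mpr ⟨hy.1, hy.2.le⟩) (mem_Ioc.mpr ⟨one_pos, le_rfl⟩) hy.2.le
          rw [h1_one] at this
          exact this
      have := antih (mem_Ioc.mpr ⟨hx, hx1.le⟩) (mem_Ioc.mpr ⟨one_pos, le_rfl⟩) hx1.le
      rw [h_one] at this
      exact this
  have : 0 ≤ (x ^ a - 1) * (x ^ b - 1) - a * b * (x - 1) ^ 2 := final
  linarith

lemma abs_rpow_sub_one_mono {t : ℝ} (ht : 0 < t) {a b : ℝ} (ha : 0 ≤ a) (hab : a ≤ b) :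
    |t ^ a - 1| ≤ |t ^ b - 1| := by
  rcases le_or_gt 1 t with h1 | h1
  · rw [abs_of_nonneg (by linarith [Real.one_le_rpow h1 ha]),
      abs_of_nonneg (by linarith [Real.one_le_rpow h1 (le_trans ha hab)])]
    linarith [Real.rpow_le_rpow_of_exponent_le h1 hab]
  · rw [abs_of_nonpos (by linarith [Real.rpow_le_one ht.le h1.le ha]),
      abs_of_nonpos (by linarith [Real.rpow_le_one ht.le h1.le (le_trans ha hab)])]
    linarith [Real.rpow_le_rpow_of_exponent_ge ht h1.le hab]

lemma sign_prod {t : ℝ} (ht : 0 < t) {a b : ℝ} (ha : 0 ≤ a) (hb : 0 ≤ b) :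
    (t ^ a - 1) * (t ^ b - 1) = |t ^ a - 1| * |t ^ b - 1| := by
  rcases le_or_gt 1 t with h1 | h1
  · rw [abs_of_nonneg (by linarith [Real.one_le_rpow h1 ha]),
      abs_of_nonneg (by linarith [Real.one_le_rpow h1 hb])]
  · rw [abs_of_nonpos (by linarith [Real.rpow_le_one ht.le h1.le ha]),
      abs_of_nonpos (by linarith [Real.rpow_le_one ht.le h1.le hb])]
    ring

theorem power_diff_inequality (ustar α γ : ℝ) (hu : 0 < ustar) (hα : 0 < α)
    (hγ : 0 < γ) (h2γ : 2 * γ ≤ α + 1) (C : ℝ)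
    (hC : C = if α < 1 then (α + 1) ^ 2 / (4 * α)
      else if γ ≤ 1 then 1 else γ ^ 2 / (2 * γ - 1)) :
    ∀ u : ℝ, 0 < u →
      (u ^ γ - ustar ^ γ) ^ 2 ≤
        C * ustar ^ (2 * γ - α - 1) * ((u - ustar) * (u ^ α - ustar ^ α)) := by
  have key : ∀ t : ℝ, 0 < t → (t ^ γ - 1) ^ 2 ≤ C * ((t - 1) * (t ^ α - 1)) := by
    intro t ht
    by_cases hα1 : α < 1
    · rw [hC, if_pos hα1]
      set β := (α + 1) / 2 with hβ
      have hβpos : 0 < β := by positivity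
      have step1 : (t ^ γ - 1) ^ 2 ≤ (t ^ β - 1) ^ 2 := by
        calc (t ^ γ - 1) ^ 2 = |t ^ γ - 1| ^ 2 := (sq_abs _).symm
          _ ≤ |t ^ β - 1| ^ 2 := by
              apply pow_le_pow_left₀ (abs_nonneg _)
              exact abs_rpow_sub_one_mono ht hγ.le (by rw [hβ]; linarith)
          _ = (t ^ β - 1) ^ 2 := sq_abs _
      have hx : (0:ℝ) < t ^ β := Real.rpow_pos_of_pos ht β
      have hco := core (a := α / β) (b := 1 / β)
        (by positivity)
        (div_le_div_of_nonneg_right hα1.le hβpos.le)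
        (by rw [hβ]; first | (field_simp; ring) | field_simp) hx
      rw [← Real.rpow_mul ht.le, ← Real.rpow_mul ht.le,
        show β * (α / β) = α by field_simp, show β * (1 / β) = 1 by field_simp,
        Real.rpow_one] at hco
      set K := (α + 1) ^ 2 / (4 * α) with hK
      have hKpos : 0 < K := by rw [hK]; positivity
      have hKα : α / β * (1 / β) * K = 1 := by
        rw [hK, hβ]
        first
        | (field_simp; ring)
        | field_simp
      have h6 := mul_le_mul_of_nonneg_left hco hKpos.le
      have h5 : (t ^ β - 1) ^ 2 ≤ K * ((t ^ α - 1) * (t - 1)) := by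
        calc (t ^ β - 1) ^ 2 = K * (α / β * (1 / β) * (t ^ β - 1) ^ 2) := by
              linear_combination (t ^ β - 1) ^ 2 * hKα.symm
          _ ≤ K * ((t ^ α - 1) * (t - 1)) := h6
      have : K * ((t ^ α - 1) * (t - 1)) = K * ((t - 1) * (t ^ α - 1)) := by ring
      linarith [le_trans step1 h5]
    · push_neg at hα1
      by_cases hγ1 : γ ≤ 1
      · rw [hC, if_neg (not_lt.mpr hα1), if_pos hγ1]
        have m1 : |t ^ γ - 1| ≤ |t - 1| := by
          have := abs_rpow_sub_one_mono ht hγ.le hγ1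
          rwa [Real.rpow_one] at this
        have m2 : |t ^ γ - 1| ≤ |t ^ α - 1| := abs_rpow_sub_one_mono ht hγ.le (le_trans hγ1 hα1)
        have sp := sign_prod ht (a := 1) (b := α) zero_le_one hα.le
        rw [Real.rpow_one] at sp
        calc (t ^ γ - 1) ^ 2 = |t ^ γ - 1| * |t ^ γ - 1| := by
              rw [← abs_mul, ← sq, abs_of_nonneg (sq_nonneg _)]
          _ ≤ |t - 1| * |t ^ α - 1| :=
              mul_le_mul m1 m2 (abs_nonneg _) (abs_nonneg _)
          _ = (t - 1) * (t ^ α - 1) := sp.symm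
          _ = 1 * ((t - 1) * (t ^ α - 1)) := (one_mul _).symm
      · push_neg at hγ1
        rw [hC, if_neg (not_lt.mpr hα1), if_neg (not_le.mpr hγ1)]
        set δ := 2 * γ - 1 with hδ
        have hδ1 : 1 ≤ δ := by rw [hδ]; linarith
        have hδα : δ ≤ α := by rw [hδ]; linarith
        have hx : (0:ℝ) < t ^ γ := Real.rpow_pos_of_pos ht γ
        have hco := core (a := 1 / γ) (b := δ / γ)
          (by positivity)
          (div_le_div_of_nonneg_right hδ1 (by linarith : (0:ℝ) ≤ γ))
          (by rw [hδ]; first | (field_simp; ring) | field_simp) hx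
        rw [← Real.rpow_mul ht.le, ← Real.rpow_mul ht.le,
          show γ * (1 / γ) = 1 by field_simp, show γ * (δ / γ) = δ by field_simp,
          Real.rpow_one] at hco
        have step2 : (t - 1) * (t ^ δ - 1) ≤ (t - 1) * (t ^ α - 1) := by
          have sp1 := sign_prod ht (a := 1) (b := δ) zero_le_one (by linarith : (0:ℝ) ≤ δ)
          have sp2 := sign_prod ht (a := 1) (b := α) zero_le_one hα.le
          rw [Real.rpow_one] at sp1 sp2
          rw [sp1, sp2]
          exact mul_le_mul_of_nonneg_left
            (abs_rpow_sub_one_mono ht (by linarith : (0:ℝ) ≤ δ) hδα) (abs_nonneg _)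
        set K := γ ^ 2 / (2 * γ - 1) with hK
        have hKpos : 0 < K := by
          rw [hK]
          exact div_pos (by positivity) (by linarith)
        have hKα : 1 / γ * (δ / γ) * K = 1 := by
          rw [hK, hδ]
          have : 2 * γ - 1 ≠ 0 := by linarith
          rw [div_mul_div_comm, div_mul_div_comm, div_eq_one_iff_eq (mul_ne_zero (by positivity) this)]
          ring
        have h6 := mul_le_mul_of_nonneg_left hco hKpos.le
        calc (t ^ γ - 1) ^ 2 = K * (1 / γ * (δ / γ) * (t ^ γ - 1) ^ 2) := by
              linear_combination (t ^ γ - 1) ^ 2 * hKα.symm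
          _ ≤ K * ((t - 1) * (t ^ δ - 1)) := h6
          _ ≤ K * ((t - 1) * (t ^ α - 1)) := mul_le_mul_of_nonneg_left step2 hKpos.le
  intro u hu'
  have ht : 0 < u / ustar := by positivity
  set t := u / ustar with htdef
  have hrw : u = ustar * t := by rw [htdef]; field_simp
  have h1 : u ^ γ = ustar ^ γ * t ^ γ := by
    rw [hrw, Real.mul_rpow hu.le ht.le]
  have h2 : u ^ α = ustar ^ α * t ^ α := by
    rw [hrw, Real.mul_rpow hu.le ht.le]
  have h3 : u - ustar = ustar * (t - 1) := by rw [hrw]; ring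
  have hpow : ustar ^ (2 * γ - α - 1) * ustar * ustar ^ α = (ustar ^ γ) ^ 2 := by
    calc ustar ^ (2 * γ - α - 1) * ustar * ustar ^ α
        = ustar ^ (2 * γ - α - 1) * ustar ^ (1:ℝ) * ustar ^ α := by rw [Real.rpow_one]
      _ = ustar ^ (2 * γ - α - 1 + 1 + α) := by rw [← Real.rpow_add hu, ← Real.rpow_add hu]
      _ = ustar ^ (γ + γ) := by ring_nf
      _ = ustar ^ γ * ustar ^ γ := Real.rpow_add hu γ γ
      _ = (ustar ^ γ) ^ 2 := (sq _).symm
  rw [h1, h2, h3]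
  have expandL : (ustar ^ γ * t ^ γ - ustar ^ γ) ^ 2 = (ustar ^ γ) ^ 2 * (t ^ γ - 1) ^ 2 := by
    ring
  have expandR : C * ustar ^ (2 * γ - α - 1) * (ustar * (t - 1) * (ustar ^ α * t ^ α - ustar ^ α))
      = (ustar ^ (2 * γ - α - 1) * ustar * ustar ^ α) * (C * ((t - 1) * (t ^ α - 1))) := by
    ring
  rw [expandL, expandR, hpow]
  exact mul_le_mul_of_nonneg_left (key t ht) (sq_nonneg _)
end

section
/- Let α > 0 with 0 < α < 1 and let y > 0, y ≠ 1. Then (y^α - 1)(y - 1) ≥ (4α/(α+1)²) · (y^{(α+1)/2} - 1)². -/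
open Real

lemma sinh_mul_le {d s : ℝ} (hd0 : 0 ≤ d) (hd1 : d ≤ 1) (hs : 0 ≤ s) :
    Real.sinh (d * s) ≤ d * Real.sinh s := by
  set f : ℝ → ℝ := fun x => d * Real.sinh x - Real.sinh (d * x) with hf
  have hderiv : ∀ x : ℝ, HasDerivAt f (d * Real.cosh x - d * Real.cosh (d * x)) x := by
    intro x
    have h1 : HasDerivAt (fun x : ℝ => d * Real.sinh x) (d * Real.cosh x) x :=
      (Real.hasDerivAt_sinh x).const_mul d
    have hinner : HasDerivAt (fun x : ℝ => d * x) d x := by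
      simpa using (hasDerivAt_id x).const_mul d
    have h2 : HasDerivAt (fun x : ℝ => Real.sinh (d * x)) (Real.cosh (d * x) * d) x :=
      (Real.hasDerivAt_sinh (d * x)).comp x hinner
    exact (h1.sub h2).congr_deriv (by ring)
  have hmono : MonotoneOn f (Set.Ici (0:ℝ)) := by
    apply monotoneOn_of_deriv_nonneg (convex_Ici 0)
    · exact (Continuous.continuousOn (by continuity))
    · intro x hx
      exact (hderiv x).differentiableAt.differentiableWithinAt
    · intro x hx
      rw [(hderiv x).deriv]
      have hx0 : 0 < x := by simpa using hx
      have : Real.cosh (d * x) ≤ Real.cosh x := by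
        rw [Real.cosh_le_cosh]
        rw [abs_of_nonneg (mul_nonneg hd0 hx0.le), abs_of_nonneg hx0.le]
        nlinarith
      nlinarith
  have h0 : f 0 ≤ f s := hmono Set.self_mem_Ici hs hs
  simp [hf] at h0
  linarith

lemma cosh_mul_le {d s : ℝ} (hd0 : 0 ≤ d) (hd1 : d ≤ 1) :
    Real.cosh (d * s) ≤ d ^ 2 * Real.cosh s + (1 - d ^ 2) := by
  wlog hs : 0 ≤ s generalizing s
  · have := this (s := -s) (by linarith)
    simpa [Real.cosh_neg, mul_neg] using this
  have key : Real.sinh (d * (s / 2)) ≤ d * Real.sinh (s / 2) :=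
    sinh_mul_le hd0 hd1 (by linarith)
  have h1 : Real.cosh (d * s) = 2 * Real.sinh (d * (s / 2)) ^ 2 + 1 := by
    have := Real.cosh_two_mul (d * (s / 2))
    have h2 := Real.cosh_sq (d * (s / 2))
    have : Real.cosh (2 * (d * (s / 2))) = 2 * Real.sinh (d * (s / 2)) ^ 2 + 1 := by
      rw [this]; linarith
    rw [← this]; ring_nf
  have h2 : Real.cosh s = 2 * Real.sinh (s / 2) ^ 2 + 1 := by
    have := Real.cosh_two_mul (s / 2)
    have h2 := Real.cosh_sq (s / 2)
    have h3 : Real.cosh (2 * (s / 2)) = 2 * Real.sinh (s / 2) ^ 2 + 1 := by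
      rw [this]; linarith
    rw [← h3]; ring_nf
  have hsinh0 : 0 ≤ Real.sinh (d * (s / 2)) := by
    rw [Real.sinh_nonneg_iff]; positivity
  nlinarith [Real.sinh_nonneg_iff.mpr (show (0:ℝ) ≤ s/2 by linarith)]

theorem cauchy_schwarz_power_step (α y : ℝ) (hα0 : 0 < α) (hα1 : α < 1)
    (hy : 0 < y) (hy1 : y ≠ 1) :
    (4 * α / (α + 1) ^ 2) * (y ^ ((α + 1) / 2) - 1) ^ 2 ≤ (y ^ α - 1) * (y - 1) := by
  set t := Real.log y with ht
  set β := (α + 1) / 2 with hβ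
  set d := (1 - α) / (α + 1) with hd
  have hβ0 : 0 < β := by rw [hβ]; linarith
  have hd0 : 0 ≤ d := by rw [hd]; apply div_nonneg <;> linarith
  have hd1 : d ≤ 1 := by
    rw [hd, div_le_one (by linarith)]; linarith
  -- exp forms
  have hB : y = Real.exp t := (Real.exp_log hy).symm
  have hA : y ^ α = Real.exp (α * t) := by
    rw [Real.rpow_def_of_pos hy, mul_comm]
  have hC : y ^ β = Real.exp (β * t) := by
    rw [Real.rpow_def_of_pos hy, mul_comm]
  set A := Real.exp (α * t) with hAe
  set B := Real.exp t with hBe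
  set C := Real.exp (β * t) with hCe
  have hABC : A * B = C ^ 2 := by
    rw [hAe, hBe, hCe, ← Real.exp_add, ← Real.exp_nat_mul]
    congr 1; rw [hβ]; ring
  have hkey := cosh_mul_le (d := d) (s := β * t) hd0 hd1
  -- 2 C cosh(d β t) = A + B ; 2 C cosh(β t) = C^2 + 1
  have hdβt : d * (β * t) = (1 - α) / 2 * t := by
    rw [hd, hβ]; field_simp
  have p1 : Real.exp (β * t) * Real.exp ((1 - α) / 2 * t) = Real.exp t := by
    rw [← Real.exp_add]; congr 1; rw [hβ]; ring
  have p2 : Real.exp (β * t) * Real.exp (-((1 - α) / 2 * t)) = Real.exp (α * t) := by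
    rw [← Real.exp_add]; congr 1; rw [hβ]; ring
  have e1 : 2 * C * Real.cosh (d * (β * t)) = A + B := by
    rw [hdβt, Real.cosh_eq, hCe, hAe, hBe]
    linear_combination p1 + p2
  have q : Real.exp (β * t) * Real.exp (-(β * t)) = 1 := by
    rw [← Real.exp_add]; simp
  have e2 : 2 * C * Real.cosh (β * t) = C ^ 2 + 1 := by
    rw [Real.cosh_eq, hCe]
    linear_combination q
  have hC0 : 0 < C := Real.exp_pos _
  have hβd : β ^ 2 * d ^ 2 = (α - 1) ^ 2 / 4 := by
    rw [hβ, hd]; field_simp; ring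
  have hβ2 : β ^ 2 = (α + 1) ^ 2 / 4 := by rw [hβ]; ring
  -- multiply key by 2 β² C
  have r1 : β ^ 2 * d ^ 2 = β ^ 2 - α := by rw [hβd, hβ2]; ring
  have hkey2 : β ^ 2 * (A + B) ≤ (β ^ 2 - α) * (C ^ 2 + 1) + 2 * α * C := by
    have h := mul_le_mul_of_nonneg_left hkey (by positivity : (0:ℝ) ≤ 2 * β ^ 2 * C)
    have expand : 2 * β ^ 2 * C * (d ^ 2 * Real.cosh (β * t) + (1 - d ^ 2))
        = (β ^ 2 - α) * (C ^ 2 + 1) + 2 * α * C := by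
      linear_combination β ^ 2 * d ^ 2 * e2 + (C ^ 2 + 1 - 2 * C) * r1
    have start : β ^ 2 * (A + B) = 2 * β ^ 2 * C * Real.cosh (d * (β * t)) := by
      linear_combination (-β ^ 2) * e1
    rw [start, ← expand]
    exact h
  -- target
  have hfin : 4 * α * (C - 1) ^ 2 ≤ 4 * β ^ 2 * ((A - 1) * (B - 1)) := by
    nlinarith [hkey2, hABC]
  rw [hA, hC, hB]
  rw [div_mul_eq_mul_div, div_le_iff₀ (by positivity : (0:ℝ) < (α+1)^2)]
  have h4 : (α + 1) ^ 2 = 4 * β ^ 2 := by rw [hβ2]; ring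
  rw [h4]
  linarith [hfin]
end

section
/- Let γ > 1 and y > 0. Then (y^γ - 1)² ≤ (γ²/(2γ-1)) · |y - 1| · |y^{2γ-1} - 1|. -/
open Real

open intervalIntegral in
lemma power_diff_aux (γ y : ℝ) (hγ : 1 < γ) (hy : 1 ≤ y) :
    (y ^ γ - 1) ^ 2 ≤ (γ ^ 2 / (2 * γ - 1)) * (y - 1) * (y ^ (2 * γ - 1) - 1) := by
  rcases eq_or_lt_of_le hy with h1 | h1
  · simp [← h1, Real.one_rpow]
  set A : ℝ := (y ^ γ - 1) / γ with hA
  have hγ0 : (0:ℝ) < γ := by linarith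
  have h2γ : (0:ℝ) < 2 * γ - 1 := by linarith
  have hint1 : IntervalIntegrable (fun s : ℝ => s ^ (γ - 1)) MeasureTheory.volume 1 y :=
    intervalIntegrable_rpow' (by linarith)
  have hint2 : IntervalIntegrable (fun s : ℝ => s ^ (2 * γ - 2)) MeasureTheory.volume 1 y :=
    intervalIntegrable_rpow' (by linarith)
  have hI1 : ∫ s in (1:ℝ)..y, s ^ (γ - 1) = A := by
    rw [integral_rpow (Or.inl (by linarith))]
    simp [hA, sub_add_cancel, Real.one_rpow]
  have hI2 : ∫ s in (1:ℝ)..y, s ^ (2 * γ - 2) = (y ^ (2 * γ - 1) - 1) / (2 * γ - 1) := by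
    rw [integral_rpow (Or.inl (by linarith)), show 2 * γ - 2 + 1 = 2 * γ - 1 by ring, Real.one_rpow]
  have key : 0 ≤ ∫ s in (1:ℝ)..y, ((y - 1) * s ^ (γ - 1) - A) ^ 2 := by
    apply intervalIntegral.integral_nonneg hy
    intro s _
    positivity
  have hexp : (∫ s in (1:ℝ)..y, ((y - 1) * s ^ (γ - 1) - A) ^ 2)
      = (y - 1) ^ 2 * ((y ^ (2 * γ - 1) - 1) / (2 * γ - 1))
        - 2 * (y - 1) * A * A + A ^ 2 * (y - 1) := by
    have hcongr : Set.EqOn (fun s : ℝ => ((y - 1) * s ^ (γ - 1) - A) ^ 2)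
        (fun s : ℝ => (y - 1) ^ 2 * s ^ (2 * γ - 2) - 2 * (y - 1) * A * s ^ (γ - 1) + A ^ 2)
        (Set.uIcc 1 y) := by
      intro s hs
      have hs0 : (0:ℝ) < s := by
        rcases Set.mem_uIcc.mp hs with h | h
        · linarith [h.1]
        · linarith [h.1, hy]
      have h2 : s ^ (2 * γ - 2) = s ^ (γ - 1) * s ^ (γ - 1) := by
        rw [← Real.rpow_add hs0]; ring_nf
      simp only [h2]; ring
    rw [intervalIntegral.integral_congr hcongr,
      intervalIntegral.integral_add (((hint2.const_mul _).sub (hint1.const_mul _)))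
        intervalIntegrable_const,
      intervalIntegral.integral_sub (hint2.const_mul _) (hint1.const_mul _),
      intervalIntegral.integral_const_mul, intervalIntegral.integral_const_mul,
      intervalIntegral.integral_const, hI1, hI2, smul_eq_mul]
    ring
  rw [hexp] at key
  have hy1 : (0:ℝ) < y - 1 := by linarith
  have hkey2 : A ^ 2 ≤ (y - 1) * ((y ^ (2 * γ - 1) - 1) / (2 * γ - 1)) := by
    nlinarith [key, hy1]
  calc (y ^ γ - 1) ^ 2 = γ ^ 2 * A ^ 2 := by rw [hA]; field_simp
    _ ≤ γ ^ 2 * ((y - 1) * ((y ^ (2 * γ - 1) - 1) / (2 * γ - 1))) :=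
        mul_le_mul_of_nonneg_left hkey2 (by positivity)
    _ = γ ^ 2 / (2 * γ - 1) * (y - 1) * (y ^ (2 * γ - 1) - 1) := by field_simp

theorem power_diff_gamma_gt_one (γ y : ℝ) (hγ : 1 < γ) (hy : 0 < y) :
    (y ^ γ - 1) ^ 2 ≤ (γ ^ 2 / (2 * γ - 1)) * |y - 1| * |y ^ (2 * γ - 1) - 1| := by
  have h2γ : (0:ℝ) < 2 * γ - 1 := by linarith
  rcases le_or_gt 1 y with h | h
  · have h1 : (1:ℝ) ≤ y ^ (2 * γ - 1) := Real.one_le_rpow h (by linarith)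
    rw [abs_of_nonneg (by linarith), abs_of_nonneg (by linarith)]
    exact power_diff_aux γ y hγ h
  · -- apply aux to z = y⁻¹
    have hz1 : (1:ℝ) ≤ y⁻¹ := by
      rw [le_inv_comm₀ one_pos hy]; simpa using h.le
    have haux := power_diff_aux γ y⁻¹ hγ hz1
    have hzγ : (y⁻¹) ^ γ = (y ^ γ)⁻¹ := Real.inv_rpow hy.le γ
    have hzu : (y⁻¹) ^ (2 * γ - 1) = (y ^ (2 * γ - 1))⁻¹ := Real.inv_rpow hy.le _
    set t := y ^ γ with ht
    set u := y ^ (2 * γ - 1) with hu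
    have ht0 : 0 < t := Real.rpow_pos_of_pos hy γ
    have hu0 : 0 < u := Real.rpow_pos_of_pos hy _
    have htu : t ^ 2 = y * u := by
      rw [ht, hu, ← Real.rpow_natCast (y ^ γ) 2, ← Real.rpow_mul hy.le,
        show γ * ((2:ℕ):ℝ) = 1 + (2 * γ - 1) by push_cast; ring,
        Real.rpow_add hy, Real.rpow_one]
    rw [hzγ, hzu] at haux
    have ht1 : t < 1 := Real.rpow_lt_one hy.le h (by linarith)
    have hu1 : u < 1 := Real.rpow_lt_one hy.le h (by linarith)
    rw [abs_of_neg (by linarith), abs_of_neg (by linarith)]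
    have hC : 0 ≤ γ ^ 2 / (2 * γ - 1) := by positivity
    have key : (t⁻¹ - 1) ^ 2 * (t ^ 2)
        ≤ (γ ^ 2 / (2 * γ - 1) * (y⁻¹ - 1) * (u⁻¹ - 1)) * (y * u) := by
      rw [← htu]
      exact mul_le_mul_of_nonneg_right haux (by positivity)
    have e1 : (t⁻¹ - 1) ^ 2 * t ^ 2 = (t - 1) ^ 2 := by
      field_simp; ring
    have e2 : (γ ^ 2 / (2 * γ - 1) * (y⁻¹ - 1) * (u⁻¹ - 1)) * (y * u)
        = γ ^ 2 / (2 * γ - 1) * (1 - y) * (1 - u) := by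
      field_simp
    rw [e1, e2] at key
    linarith [key]
end

section
/- Let μ, ν, γ, u* > 0, β ≥ 1, N ≥ 1 a positive integer, and set v* = (ν/μ)·(u*)^γ. Define χ_β = 2(2β-1)/max{2, γN} and χ_β*(u*) = inf over n ≥ 1 of [(1+v*)^β/(νγ·(u*)^γ)·(μ+λ_n)], where λ_n > 0 for all n ≥ 1. Then χ_β/2 ≤ χ_β*(u*). -/
open Real

/-- `(1+v) log (1+v) ≥ 2v - 1` for `v ≥ 0`. -/
lemma aux_log_ineq (v : ℝ) (hv : 0 ≤ v) :
    2 * v - 1 ≤ (1 + v) * Real.log (1 + v) := by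
  have ha : (0:ℝ) < 1 + v := by linarith
  have h3 : (0:ℝ) < 3 / (1 + v) := by positivity
  have h1 : Real.log (3 / (1 + v)) ≤ 3 / (1 + v) - 1 := Real.log_le_sub_one_of_pos h3
  have h2 : Real.log (3 / (1 + v)) = Real.log 3 - Real.log (1 + v) := by
    rw [Real.log_div (by norm_num) (ne_of_gt ha)]
  have hlog3 : (1:ℝ) ≤ Real.log 3 := by
    rw [Real.le_log_iff_exp_le (by norm_num)]
    calc Real.exp 1 ≤ 2.7182818286 := le_of_lt Real.exp_one_lt_d9
      _ ≤ 3 := by norm_num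
  have h4 : 2 - 3 / (1 + v) ≤ Real.log (1 + v) := by
    rw [h2] at h1; linarith
  have h5 : (1 + v) * (2 - 3 / (1 + v)) ≤ (1 + v) * Real.log (1 + v) :=
    mul_le_mul_of_nonneg_left h4 (le_of_lt ha)
  have h6 : (1 + v) * (2 - 3 / (1 + v)) = 2 * (1 + v) - 3 := by
    field_simp
  rw [h6] at h5
  linarith

/-- Key inequality: `(2β - 1) v ≤ (1+v)^β` for `v > 0`, `β ≥ 1`. -/
lemma aux_key (v β : ℝ) (hv : 0 < v) (hβ : 1 ≤ β) :
    (2 * β - 1) * v ≤ (1 + v) ^ β := by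
  have ha : (0:ℝ) < 1 + v := by linarith
  rcases le_total β 2 with hb2 | hb2
  · -- 1 ≤ β ≤ 2
    set L := Real.log (1 + v) with hL
    have hLpos : 0 ≤ L := Real.log_nonneg (by linarith)
    have hexp : (1 + v) ^ (β - 1) = Real.exp ((β - 1) * L) := by
      rw [Real.rpow_def_of_pos ha, hL, mul_comm]
    have hbern : 1 + (β - 1) * L ≤ (1 + v) ^ (β - 1) := by
      rw [hexp]
      linarith [Real.add_one_le_exp ((β - 1) * L)]
    have hsplit : (1 + v) ^ β = (1 + v) * (1 + v) ^ (β - 1) := by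
      rw [show β = 1 + (β - 1) by ring, Real.rpow_add ha, Real.rpow_one]
      ring_nf
    have hlog := aux_log_ineq v (le_of_lt hv)
    have hc0 : 0 ≤ β - 1 := by linarith
    have hc1 : β - 1 ≤ 1 := by linarith
    have hstep : (2 * β - 1) * v ≤ (1 + v) * (1 + (β - 1) * L) := by
      have hX : -1 ≤ (1 + v) * L - 2 * v := by linarith
      have h7 : -(β - 1) ≤ (β - 1) * ((1 + v) * L - 2 * v) := by nlinarith
      nlinarith [h7]
    calc (2 * β - 1) * v ≤ (1 + v) * (1 + (β - 1) * L) := hstep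
      _ ≤ (1 + v) * (1 + v) ^ (β - 1) :=
          mul_le_mul_of_nonneg_left hbern (le_of_lt ha)
      _ = (1 + v) ^ β := hsplit.symm
  · -- β ≥ 2
    have hp : 1 ≤ β / 2 := by linarith
    have hbern : 1 + (β / 2) * v ≤ (1 + v) ^ (β / 2) :=
      one_add_mul_self_le_rpow_one_add (by linarith) hp
    have hpos : (0:ℝ) ≤ 1 + (β / 2) * v := by nlinarith
    have hsq : (1 + (β / 2) * v) ^ (2:ℕ) ≤ ((1 + v) ^ (β / 2)) ^ (2:ℕ) :=
      pow_le_pow_left₀ hpos hbern 2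
    have hmul : ((1 + v) ^ (β / 2)) ^ (2:ℕ) = (1 + v) ^ β := by
      rw [← Real.rpow_natCast ((1 + v) ^ (β / 2)) 2, ← Real.rpow_mul (le_of_lt ha)]
      norm_num
    rw [← hmul]
    nlinarith [sq_nonneg (β * v / 2 - 1), hsq]

theorem chi_beta_half_le_chi_star (μ ν γ ustar β : ℝ) (N : ℕ) (lam : ℕ → ℝ)
    (hμ : 0 < μ) (hν : 0 < ν) (hγ : 0 < γ) (hu : 0 < ustar) (hβ : 1 ≤ β)
    (hN : 1 ≤ N) (hlam : ∀ n : ℕ, 1 ≤ n → 0 < lam n) :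
    (2 * (2 * β - 1) / max 2 (γ * N)) / 2 ≤
      ⨅ n : {k : ℕ // 1 ≤ k},
        (1 + (ν / μ * ustar ^ γ)) ^ β / (ν * γ * ustar ^ γ) * (μ + lam n) := by
  have hP : (0:ℝ) < ustar ^ γ := Real.rpow_pos_of_pos hu γ
  set P := ustar ^ γ with hPdef
  set v := ν / μ * P with hvdef
  have hv : 0 < v := by positivity
  have hR : 0 < (1 + v) ^ β := Real.rpow_pos_of_pos (by linarith) β
  set R := (1 + v) ^ β with hRdef
  have : Nonempty {k : ℕ // 1 ≤ k} := ⟨⟨1, le_refl 1⟩⟩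
  apply le_ciInf
  rintro ⟨n, hn⟩
  have hl : 0 < lam n := hlam n hn
  have hN1 : (1:ℝ) ≤ (N:ℝ) := by exact_mod_cast hN
  have hM2 : (2:ℝ) ≤ max 2 (γ * N) := le_max_left _ _
  have hγM : γ ≤ max 2 (γ * N) :=
    le_trans (by nlinarith) (le_max_right 2 (γ * (N:ℝ)))
  have hMpos : (0:ℝ) < max 2 (γ * N) := by linarith
  have hkey : (2 * β - 1) * v ≤ R := aux_key v β hv hβ
  have hstep1 : 2 * (2 * β - 1) / max 2 (γ * N) / 2 = (2 * β - 1) / max 2 (γ * N) := by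
    field_simp
  rw [hstep1]
  have h2b : (0:ℝ) ≤ 2 * β - 1 := by linarith
  calc (2 * β - 1) / max 2 (γ * N) ≤ (2 * β - 1) / γ :=
        div_le_div_of_nonneg_left h2b hγ hγM
    _ ≤ R * μ / (ν * γ * P) := by
        have hD : (0:ℝ) < ν * γ * P := by positivity
        rw [div_le_div_iff₀ hγ hD]
        have h9 : (2 * β - 1) * (ν * γ * P) = ((2 * β - 1) * v) * (γ * μ) := by
          rw [hvdef]; field_simp
        rw [h9]
        nlinarith [mul_le_mul_of_nonneg_right hkey (le_of_lt (mul_pos hγ hμ))]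
    _ = R / (ν * γ * P) * μ := by rw [mul_div_right_comm]
    _ ≤ R / (ν * γ * P) * (μ + lam n) := by
        apply mul_le_mul_of_nonneg_left (by linarith)
        positivity
end

section
/- Let κ₀ > 0, γ > 0, and let ū, u̲ : [0,T) → ℝ be continuously differentiable with 0 < u̲(0) ≤ 1 ≤ ū(0), satisfying: whenever u̲(τ) = 1 and ū(τ) > 1 one has u̲'(τ) = κ₀·(1 - ū(τ)^γ) < 0, whenever ū(τ) = 1 and u̲(τ) < 1 one has ū'(τ) ≥ κ₀·(1 - u̲(τ)^γ) > 0, and if u̲(τ) = ū(τ) = 1 at some τ then u̲ ≡ ū ≡ 1 on [τ, T). Then u̲(τ) ≤ 1 ≤ ū(τ) for all τ ∈ [0,T). -/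
open Real Set Filter

lemma deriv_neg_right_aux (f : ℝ → ℝ) (f' t : ℝ) (h : HasDerivAt f f' t)
    (hf' : f' < 0) : ∀ᶠ s in nhdsWithin t (Ioi t), f s < f t := by
  have hs := hasDerivAt_iff_tendsto_slope.1 h
  have h2 : ∀ᶠ s in nhdsWithin t {t}ᶜ, slope f t s < 0 :=
    hs.eventually_lt_const hf'
  have h3 : ∀ᶠ s in nhdsWithin t (Ioi t), slope f t s < 0 :=
    h2.filter_mono (nhdsWithin_mono t (fun s hs => ne_of_gt hs))
  filter_upwards [h3, self_mem_nhdsWithin] with s hsl hst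
  have hpos : 0 < s - t := sub_pos.2 hst
  have hmul : slope f t s * (s - t) < 0 := mul_neg_of_neg_of_pos hsl hpos
  rw [slope_def_field, div_mul_cancel₀ _ (ne_of_gt hpos)] at hmul
  linarith

lemma deriv_pos_right_aux (f : ℝ → ℝ) (f' t : ℝ) (h : HasDerivAt f f' t)
    (hf' : 0 < f') : ∀ᶠ s in nhdsWithin t (Ioi t), f t < f s := by
  have hs := hasDerivAt_iff_tendsto_slope.1 h
  have h2 : ∀ᶠ s in nhdsWithin t {t}ᶜ, 0 < slope f t s :=
    hs.eventually_const_lt hf'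
  have h3 : ∀ᶠ s in nhdsWithin t (Ioi t), 0 < slope f t s :=
    h2.filter_mono (nhdsWithin_mono t (fun s hs => ne_of_gt hs))
  filter_upwards [h3, self_mem_nhdsWithin] with s hsl hst
  have hpos : 0 < s - t := sub_pos.2 hst
  have hmul : 0 < slope f t s * (s - t) := mul_pos hsl hpos
  rw [slope_def_field, div_mul_cancel₀ _ (ne_of_gt hpos)] at hmul
  linarith

theorem rectangle_invariant_region (κ₀ γ T : ℝ) (hκ : 0 < κ₀) (hγ : 0 < γ)
    (ub lb dub dlb : ℝ → ℝ)
    (hub : ∀ τ ∈ Ico 0 T, HasDerivAt ub (dub τ) τ)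
    (hlb : ∀ τ ∈ Ico 0 T, HasDerivAt lb (dlb τ) τ)
    (hubc : ContinuousOn dub (Ico 0 T))
    (hlbc : ContinuousOn dlb (Ico 0 T))
    (h0 : 0 < lb 0) (h0' : lb 0 ≤ 1) (h0'' : 1 ≤ ub 0)
    (hcond1 : ∀ τ ∈ Ico 0 T, lb τ = 1 → 1 < ub τ →
      dlb τ = κ₀ * (1 - (ub τ) ^ γ) ∧ dlb τ < 0)
    (hcond2 : ∀ τ ∈ Ico 0 T, ub τ = 1 → lb τ < 1 →
      κ₀ * (1 - (lb τ) ^ γ) ≤ dub τ ∧ 0 < dub τ)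
    (hcond3 : ∀ τ ∈ Ico 0 T, lb τ = 1 → ub τ = 1 →
      ∀ s ∈ Ico τ T, lb s = 1 ∧ ub s = 1) :
    ∀ τ ∈ Ico 0 T, lb τ ≤ 1 ∧ 1 ≤ ub τ := by
  intro τ hτ
  by_contra hbad
  set B : Set ℝ := {s | s ∈ Ico 0 T ∧ ¬(lb s ≤ 1 ∧ 1 ≤ ub s)} with hBdef
  have hBne : B.Nonempty := ⟨τ, hτ, hbad⟩
  have hBdd : BddBelow B := ⟨0, fun b hb => hb.1.1⟩
  set t := sInf B with htdef
  have ht0 : 0 ≤ t := le_csInf hBne (fun b hb => hb.1.1)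
  have htT : t < T := lt_of_le_of_lt (csInf_le hBdd ⟨hτ, hbad⟩) hτ.2
  have htmem : t ∈ Ico 0 T := ⟨ht0, htT⟩
  have hgoodlt : ∀ s, 0 ≤ s → s < t → lb s ≤ 1 ∧ 1 ≤ ub s := by
    intro s hs hst
    by_contra h
    exact absurd (csInf_le hBdd ⟨⟨hs, hst.trans htT⟩, h⟩) (not_le.2 hst)
  have hlbct : ContinuousAt lb t := (hlb t htmem).continuousAt
  have hubct : ContinuousAt ub t := (hub t htmem).continuousAt
  have hlbt : lb t ≤ 1 := by
    rcases eq_or_lt_of_le ht0 with h | h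
    · rw [← h]; exact h0'
    · refine le_of_tendsto (hlbct.continuousWithinAt.tendsto (s := Iio t)) ?_
      filter_upwards [Ioo_mem_nhdsLT_of_mem (Set.mem_Ioc.2 ⟨h, le_refl t⟩)] with s hs
      exact (hgoodlt s hs.1.le hs.2).1
  have hubt : 1 ≤ ub t := by
    rcases eq_or_lt_of_le ht0 with h | h
    · rw [← h]; exact h0''
    · refine ge_of_tendsto (hubct.continuousWithinAt.tendsto (s := Iio t)) ?_
      filter_upwards [Ioo_mem_nhdsLT_of_mem (Set.mem_Ioc.2 ⟨h, le_refl t⟩)] with s hs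
      exact (hgoodlt s hs.1.le hs.2).2
  -- main case analysis
  rcases eq_or_lt_of_le hlbt with hlbeq | hlblt
  · rcases eq_or_lt_of_le hubt with hubeq | hubgt
    · -- both equal 1: everything is 1 from t on
      have hall := hcond3 t htmem hlbeq hubeq.symm
      obtain ⟨b, hbB⟩ := hBne
      have hbt : t ≤ b := csInf_le hBdd hbB
      have := hall b ⟨hbt, hbB.1.2⟩
      exact hbB.2 ⟨this.1.le, this.2.ge⟩
    · -- lb t = 1 < ub t
      obtain ⟨_, hdneg⟩ := hcond1 t htmem hlbeq hubgt
      have h1 : ∀ᶠ s in nhdsWithin t (Ioi t), lb s < lb t :=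
        deriv_neg_right_aux lb (dlb t) t (hlb t htmem) hdneg
      have h2 : ∀ᶠ s in nhdsWithin t (Ioi t), 1 < ub s :=
        (hubct.eventually_const_lt hubgt).filter_mono nhdsWithin_le_nhds
      have hev : ∀ᶠ s in nhdsWithin t (Ioi t), lb s ≤ 1 ∧ 1 ≤ ub s := by
        filter_upwards [h1, h2] with s hs1 hs2
        exact ⟨by rw [hlbeq] at hs1; exact hs1.le, hs2.le⟩
      obtain ⟨u, hu, hsub⟩ := mem_nhdsGT_iff_exists_Ioo_subset.1 hev
      have hub' : ∀ b ∈ B, u ≤ b := by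
        intro b hb
        by_contra hbu
        have hbt : t ≤ b := csInf_le hBdd hb
        rcases eq_or_lt_of_le hbt with h | h
        · rw [← h] at hb; exact hb.2 ⟨hlbt, hubt⟩
        · exact hb.2 (hsub ⟨h, not_le.1 hbu⟩)
      exact absurd (le_csInf hBne hub') (not_le.2 hu)
  · rcases eq_or_lt_of_le hubt with hubeq | hubgt
    · -- ub t = 1, lb t < 1
      obtain ⟨_, hdpos⟩ := hcond2 t htmem hubeq.symm hlblt
      have h1 : ∀ᶠ s in nhdsWithin t (Ioi t), ub t < ub s :=
        deriv_pos_right_aux ub (dub t) t (hub t htmem) hdpos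
      have h2 : ∀ᶠ s in nhdsWithin t (Ioi t), lb s < 1 :=
        (hlbct.eventually_lt_const hlblt).filter_mono nhdsWithin_le_nhds
      have hev : ∀ᶠ s in nhdsWithin t (Ioi t), lb s ≤ 1 ∧ 1 ≤ ub s := by
        filter_upwards [h1, h2] with s hs1 hs2
        exact ⟨hs2.le, by rw [← hubeq] at hs1; exact hs1.le⟩
      obtain ⟨u, hu, hsub⟩ := mem_nhdsGT_iff_exists_Ioo_subset.1 hev
      have hub' : ∀ b ∈ B, u ≤ b := by
        intro b hb
        by_contra hbu
        have hbt : t ≤ b := csInf_le hBdd hb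
        rcases eq_or_lt_of_le hbt with h | h
        · rw [← h] at hb; exact hb.2 ⟨hlbt, hubt⟩
        · exact hb.2 (hsub ⟨h, not_le.1 hbu⟩)
      exact absurd (le_csInf hBne hub') (not_le.2 hu)
    · -- lb t < 1 < ub t
      have h1 : ∀ᶠ s in nhdsWithin t (Ioi t), lb s < 1 :=
        (hlbct.eventually_lt_const hlblt).filter_mono nhdsWithin_le_nhds
      have h2 : ∀ᶠ s in nhdsWithin t (Ioi t), 1 < ub s :=
        (hubct.eventually_const_lt hubgt).filter_mono nhdsWithin_le_nhds
      have hev : ∀ᶠ s in nhdsWithin t (Ioi t), lb s ≤ 1 ∧ 1 ≤ ub s := by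
        filter_upwards [h1, h2] with s hs1 hs2
        exact ⟨hs1.le, hs2.le⟩
      obtain ⟨u, hu, hsub⟩ := mem_nhdsGT_iff_exists_Ioo_subset.1 hev
      have hub' : ∀ b ∈ B, u ≤ b := by
        intro b hb
        by_contra hbu
        have hbt : t ≤ b := csInf_le hBdd hb
        rcases eq_or_lt_of_le hbt with h | h
        · rw [← h] at hb; exact hb.2 ⟨hlbt, hubt⟩
        · exact hb.2 (hsub ⟨h, not_le.1 hbu⟩)
      exact absurd (le_csInf hBne hub') (not_le.2 hu)
end
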